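/- Let φ₁, …, φₙ be linear maps from F₂^m to F₂², where m = n + k and 1 ≤ k ≤ n, such that the intersection of their kernels is {0}. Then there exist indices i₁, …, i_k such that the map F₂^m → (F₂²)^k sending v to (φ_{i₁}(v), …, φ_{i_k}(v)) is surjective. -/

import Mathlib

/-!
Greedily pick maps whose kernels cut the current intersection `D` of chosen kernels down by the
full two dimensions. While fewer than `k` maps are chosen such a map exists: otherwise every
unchosen kernel lowers `dim D` by at most one and every chosen one not at all, while, since all
kernels together meet in `0`, the drops must add up to at least `dim D = m - 2s > n - s`.
After `k` steps the kernel of `v ↦ (φ_{i₁} v, …, φ_{i_k} v)` has dimension `m - 2k`, so by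
rank–nullity its image is all of `(F₂²)^k`. The same count works for kernels of codimension at
most `r` in a space of dimension `(r - 1) n + k`.
-/

open Module Submodule

namespace Submodule

variable {F V : Type*} [Field F] [AddCommGroup V] [Module F V] [FiniteDimensional F V]

theorem finrank_add_finrank_le_finrank_inf_add {A B C : Submodule F V} (hA : A ≤ C)
    (hB : B ≤ C) : finrank F A + finrank F B ≤ finrank F ↥(A ⊓ B) + finrank F C := by
  have := finrank_sup_add_finrank_inf_eq A B
  have := finrank_mono (sup_le hA hB)
  omega

theorem finrank_le_finrank_inf_finsetInf_add_sum {ι : Type*} (D : Submodule F V)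
    (K : ι → Submodule F V) (T : Finset ι) :
    finrank F D ≤
      finrank F ↥(D ⊓ T.inf K) + ∑ i ∈ T, (finrank F D - finrank F ↥(D ⊓ K i)) := by
  classical
  induction T using Finset.induction with
  | empty => rw [Finset.inf_empty, inf_top_eq, Finset.sum_empty, add_zero]
  | insert a T ha ih =>
    rw [Finset.inf_insert, Finset.sum_insert ha, inf_inf_distrib_left]
    have := finrank_add_finrank_le_finrank_inf_add (inf_le_left : D ⊓ K a ≤ D)
      (inf_le_left : D ⊓ T.inf K ≤ D)
    have := finrank_mono (inf_le_left : D ⊓ K a ≤ D)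
    omega

section Greedy

variable {ι : Type*} [Fintype ι] {K : ι → Submodule F V} {r : ℕ}

theorem exists_finrank_inf_add_eq (hcodim : ∀ i, finrank F V ≤ finrank F (K i) + r)
    (hbot : ⨅ i, K i = ⊥) (D : Submodule F V) (S : Finset ι) (hDS : ∀ i ∈ S, D ≤ K i)
    (hlt : (r - 1) * (Fintype.card ι - S.card) < finrank F D) :
    ∃ i ∉ S, finrank F ↥(D ⊓ K i) + r = finrank F D := by
  classical
  by_contra! hne
  let drop i := finrank F D - finrank F ↥(D ⊓ K i)
  have hdrop_chosen : ∀ i ∈ S, drop i = 0 := fun i hi => by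
    simp only [drop]
    rw [inf_eq_left.mpr (hDS i hi), Nat.sub_self]
  have hdrop_other : ∀ i ∉ S, drop i ≤ r - 1 := fun i hi => by
    have := finrank_add_finrank_le_finrank_inf_add (le_top : D ≤ ⊤) (le_top : K i ≤ ⊤)
    rw [finrank_top] at this
    have := hcodim i
    have := hne i hi
    simp only [drop]
    omega
  have hsum_le : ∑ i, drop i ≤ (r - 1) * (Fintype.card ι - S.card) := calc
    ∑ i, drop i = ∑ i ∈ Sᶜ, drop i := by
      rw [← Finset.sum_add_sum_compl S, Finset.sum_eq_zero hdrop_chosen, zero_add]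
    _ ≤ Sᶜ.card • (r - 1) :=
      Finset.sum_le_card_nsmul _ _ _ fun i hi => hdrop_other i (Finset.mem_compl.mp hi)
    _ = (r - 1) * (Fintype.card ι - S.card) := by
      rw [Finset.card_compl, smul_eq_mul, mul_comm]
  have hsum_ge : finrank F D ≤ finrank F ↥(D ⊓ Finset.univ.inf K) + ∑ i, drop i :=
    finrank_le_finrank_inf_finsetInf_add_sum D K Finset.univ
  rw [Finset.inf_univ_eq_iInf, hbot, inf_bot_eq, finrank_bot] at hsum_ge
  omega

theorem exists_finset_finrank_finsetInf_add_mul_eq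
    (hcodim : ∀ i, finrank F V ≤ finrank F (K i) + r) (hbot : ⨅ i, K i = ⊥) {k : ℕ}
    (hV : finrank F V = (r - 1) * Fintype.card ι + k) :
    ∀ s ≤ k, ∃ S : Finset ι,
      S.card = s ∧ finrank F ↥(S.inf K) + r * s = finrank F V := by
  classical
  intro s
  induction s with
  | zero =>
    exact fun _ => ⟨∅, rfl, by rw [Finset.inf_empty, finrank_top, mul_zero, add_zero]⟩
  | succ s ih =>
    intro hs
    obtain ⟨S, rfl, hS⟩ := ih (by omega)
    have hlt : (r - 1) * (Fintype.card ι - S.card) < finrank F ↥(S.inf K) := by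
      obtain ⟨t, ht⟩ := Nat.exists_eq_add_of_le (Finset.card_le_univ S)
      rw [ht, Nat.add_sub_cancel_left]
      rw [hV, ht] at hS
      rcases r with _ | r
      · simp only [Nat.zero_sub, zero_mul] at hS ⊢
        omega
      · rw [Nat.add_sub_cancel] at hS ⊢
        nlinarith
    obtain ⟨i, hiS, hi⟩ :=
      exists_finrank_inf_add_eq hcodim hbot _ S (fun _ => Finset.inf_le) hlt
    refine ⟨insert i S, Finset.card_insert_of_notMem hiS, ?_⟩
    rw [Finset.inf_insert, inf_comm]
    linarith

end Greedy

end Submodule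

namespace LinearMap

variable {F V W : Type*} [Field F] [AddCommGroup V] [Module F V] [FiniteDimensional F V]
  [AddCommGroup W] [Module F W] [FiniteDimensional F W] (f : V →ₗ[F] W)

theorem finrank_le_finrank_ker_add : finrank F V ≤ finrank F (ker f) + finrank F W := by
  have := f.finrank_range_add_finrank_ker
  have := finrank_le (range f)
  omega

theorem surjective_of_finrank_ker_add_le (h : finrank F (ker f) + finrank F W ≤ finrank F V) :
    Function.Surjective f := by
  rw [← range_eq_top]
  apply eq_top_of_finrank_eq
  have := f.finrank_range_add_finrank_ker
  have := finrank_le (range f)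
  omega

end LinearMap

theorem linearalgebrasurj_general (n k : ℕ)
    (φ : Fin n → ((Fin (n + k) → ZMod 2) →ₗ[ZMod 2] (Fin 2 → ZMod 2)))
    (hker : (⨅ i : Fin n, LinearMap.ker (φ i)) = ⊥) :
    ∃ ι : Fin k → Fin n, Function.Injective ι ∧
      Function.Surjective
        (fun v : Fin (n + k) → ZMod 2 => (fun j : Fin k => φ (ι j) v)) := by
  have hW : finrank (ZMod 2) (Fin 2 → ZMod 2) = 2 := by simp
  have hV : finrank (ZMod 2) (Fin (n + k) → ZMod 2) = (2 - 1) * Fintype.card (Fin n) + k := by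
    simp
  obtain ⟨S, hS, hrank⟩ := exists_finset_finrank_finsetInf_add_mul_eq
    (fun i => (φ i).finrank_le_finrank_ker_add.trans_eq (by rw [hW])) hker hV k le_rfl
  let ι := S.orderEmbOfFin hS
  let ψ := LinearMap.pi fun j => φ (ι j)
  have hker_ψ : LinearMap.ker ψ = S.inf fun i => LinearMap.ker (φ i) := by
    rw [LinearMap.ker_pi, ← iInf_range (f := ι) (g := fun i => LinearMap.ker (φ i)),
      S.range_orderEmbOfFin hS, Finset.inf_eq_iInf]
    rfl
  have hcod : finrank (ZMod 2) (Fin k → Fin 2 → ZMod 2) = k * 2 := by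
    rw [finrank_pi_fintype, hW, Finset.sum_const, Finset.card_univ, Fintype.card_fin, smul_eq_mul]
  refine ⟨ι, ι.injective, ψ.surjective_of_finrank_ker_add_le ?_⟩
  rw [hker_ψ, hcod]
  omega

/-- Let `φ₁, …, φₙ` be `F₂`-linear maps from `F₂^m` to `F₂²`, where
`m = n + k` and `1 ≤ k ≤ n`, whose kernels intersect trivially. Then there exist
(distinct) indices `i₁, …, i_k` such that `v ↦ (φ_{i₁}(v), …, φ_{i_k}(v))` is surjective. -/
theorem linearalgebrasurj (n k : ℕ) (hk1 : 1 ≤ k) (hkn : k ≤ n)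
    (φ : Fin n → ((Fin (n + k) → ZMod 2) →ₗ[ZMod 2] (Fin 2 → ZMod 2)))
    (hker : (⨅ i : Fin n, LinearMap.ker (φ i)) = ⊥) :
    ∃ ι : Fin k → Fin n, Function.Injective ι ∧
      Function.Surjective
        (fun v : Fin (n + k) → ZMod 2 => (fun j : Fin k => φ (ι j) v)) :=
  linearalgebrasurj_general n k φ hker
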